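/- Let C be a pure injective R-module. Then the class ⊥C = {M : Ext¹_R(M, C) = 0} is closed under pure quotient modules: if M ∈ ⊥C and 0 → M′ → M → M″ → 0 is pure exact, then M″ ∈ ⊥C. -/

import Mathlib

universe u

open TensorProduct CategoryTheory DirectSum

noncomputable section

/-- The submodule of relations presenting the tensor product `Q ⊗_R M` as a quotient of
`Q ⊗_ℤ M`, for a right `R`-module `Q` and a left `R`-module `M`. -/
def tensorRelations (R : Type u) [Ring R] (Q : Type u) [AddCommGroup Q] [Module Rᵐᵒᵖ Q]
    (M : Type u) [AddCommGroup M] [Module R M] : Submodule ℤ (TensorProduct ℤ Q M) :=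
  Submodule.span ℤ
    {x | ∃ (q : Q) (r : R) (m : M), x = (MulOpposite.op r • q) ⊗ₜ[ℤ] m - q ⊗ₜ[ℤ] (r • m)}

/-- The map `Q ⊗_R M → Q ⊗_R N` induced by `f` is injective, where `Q ⊗_R -` is realized
as the quotient of `Q ⊗_ℤ -` by `tensorRelations`. -/
def StaysInjective (R : Type u) [Ring R] (Q : Type u) [AddCommGroup Q] [Module Rᵐᵒᵖ Q]
    {M N : Type u} [AddCommGroup M] [Module R M] [AddCommGroup N] [Module R N]
    (f : M →ₗ[R] N) : Prop :=
  ∀ z : TensorProduct ℤ Q M,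
    LinearMap.lTensor Q f.toAddMonoidHom.toIntLinearMap z ∈ tensorRelations R Q N →
      z ∈ tensorRelations R Q M

/-- `f` is a pure monomorphism of left `R`-modules: it is injective and stays injective
after tensoring with every right `R`-module. -/
def IsPureMono (R : Type u) [Ring R] {M N : Type u} [AddCommGroup M] [Module R M]
    [AddCommGroup N] [Module R N] (f : M →ₗ[R] N) : Prop :=
  Function.Injective f ∧
    ∀ (Q : Type u) [AddCommGroup Q] [Module Rᵐᵒᵖ Q], StaysInjective R Q f

/-- `N` is a pure submodule of `M`. -/
def IsPureSubmodule (R : Type u) [Ring R] {M : Type u} [AddCommGroup M] [Module R M]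
    (N : Submodule R M) : Prop :=
  IsPureMono R N.subtype

/-- `0 → M' → M → M'' → 0` is a pure exact sequence of left `R`-modules. -/
def IsPureExactSeq (R : Type u) [Ring R] {M' M M'' : Type u}
    [AddCommGroup M'] [Module R M'] [AddCommGroup M] [Module R M]
    [AddCommGroup M''] [Module R M'']
    (f : M' →ₗ[R] M) (g : M →ₗ[R] M'') : Prop :=
  Function.Surjective g ∧ Function.Exact f g ∧ IsPureMono R f

/-- `C` is a pure injective left `R`-module: every homomorphism to `C` extends along
every pure monomorphism. -/
def IsPureInjective (R : Type u) [Ring R] (C : Type u) [AddCommGroup C] [Module R C] : Prop :=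
  ∀ (M N : Type u) [AddCommGroup M] [Module R M] [AddCommGroup N] [Module R N]
    (f : M →ₗ[R] N), IsPureMono R f → ∀ φ : M →ₗ[R] C, ∃ ψ : N →ₗ[R] C, ψ ∘ₗ f = φ

/-- `Ext¹_R(M, N) = 0`, phrased via the `Ext` bifunctor on the category of
left `R`-modules. -/
def Ext1Zero (R : Type u) [Ring R] (M N : Type u) [AddCommGroup M] [Module R M]
    [AddCommGroup N] [Module R N] : Prop :=
  Subsingleton (((Ext ℤ (ModuleCat.{u} R) 1).obj (Opposite.op (ModuleCat.of R M))).obj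
    (ModuleCat.of R N))

/-!
Present `M''` as a quotient `π : P → M''` of a projective module; then `Ext¹(M'', C) = 0` says
exactly that every map `ker π → C` extends to `P`. Lift `π` through `g` to `t : P → M`. The map
`(p, m') ↦ t p + f m'` from `P × M'` onto `M` has kernel isomorphic to `ker π`, so, as
`Ext¹(M, C) = 0`, a map `φ : ker π → C` extends to some `σ` on `P × M'`. Pure injectivity of `C`
extends the restriction of `σ` to `M'` along `f` to some `ψ : M → C`, and then
`p ↦ σ (p, 0) - ψ (t p)` extends `φ`.
-/

section

variable {R : Type u} [Ring R]

def ExtendsAlong (C : Type*) [AddCommGroup C] [Module R C] {A B : Type*} [AddCommGroup A]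
    [Module R A] [AddCommGroup B] [Module R B] (i : A →ₗ[R] B) : Prop :=
  ∀ φ : A →ₗ[R] C, ∃ ψ : B →ₗ[R] C, ψ ∘ₗ i = φ

theorem exists_comp_eq_of_ker_le {A B D : Type*} [AddCommGroup A] [Module R A]
    [AddCommGroup B] [Module R B] [AddCommGroup D] [Module R D] {ρ : A →ₗ[R] B}
    (hρ : Function.Surjective ρ) (h : A →ₗ[R] D) (hker : LinearMap.ker ρ ≤ LinearMap.ker h) :
    ∃ σ : B →ₗ[R] D, σ ∘ₗ ρ = h :=
  ⟨(LinearMap.ker ρ).liftQ h hker ∘ₗ (ρ.quotKerEquivOfSurjective hρ).symm.toLinearMap, by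
    ext a
    have : (ρ.quotKerEquivOfSurjective hρ).symm (ρ a) = Submodule.Quotient.mk a :=
      (LinearEquiv.symm_apply_eq _).2 rfl
    simp [this]⟩

theorem ExtendsAlong.ker_of_comp_eq {C P X Y : Type*} [AddCommGroup C] [Module R C]
    [AddCommGroup P] [Module R P] [AddCommGroup X] [Module R X] [AddCommGroup Y] [Module R Y]
    {π : P →ₗ[R] X} (hπ : Function.Surjective π) {q : Y →ₗ[R] X} {t : P →ₗ[R] Y}
    (htq : q ∘ₗ t = π) (h : ExtendsAlong C (LinearMap.ker π).subtype) :
    ExtendsAlong C (LinearMap.ker q).subtype := by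
  intro φ
  have ht : ∀ p ∈ LinearMap.ker π, t p ∈ LinearMap.ker q := fun p hp => by
    rwa [LinearMap.mem_ker, ← LinearMap.comp_apply, htq]
  obtain ⟨ψ, hψ⟩ := h (φ ∘ₗ t.restrict ht)
  let ρ := t.coprod (LinearMap.ker q).subtype
  have hρ : Function.Surjective ρ := fun y => by
    obtain ⟨p, hp⟩ := hπ (q y)
    have hk : y - t p ∈ LinearMap.ker q := by
      rw [LinearMap.mem_ker, map_sub, ← LinearMap.comp_apply, htq, hp, sub_self]
    exact ⟨(p, ⟨y - t p, hk⟩), by simp [ρ]⟩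
  obtain ⟨σ, hσ⟩ := exists_comp_eq_of_ker_le hρ (ψ.coprod φ) fun ⟨p, k⟩ hpk => by
    have htp : t p = -k := eq_neg_of_add_eq_zero_left hpk
    have hp : p ∈ LinearMap.ker π := by
      rw [LinearMap.mem_ker, ← htq, LinearMap.comp_apply, htp, map_neg, k.2, neg_zero]
    have hψp : ψ p = -φ k := calc
      ψ p = φ (t.restrict ht ⟨p, hp⟩) := LinearMap.congr_fun hψ ⟨p, hp⟩
      _ = φ (-k) := congrArg φ (Subtype.ext htp)
      _ = -φ k := map_neg φ k
    simp [hψp]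
  exact ⟨σ, LinearMap.ext fun k => by simpa [ρ] using LinearMap.congr_fun hσ (0, k)⟩

theorem CategoryTheory.ProjectiveResolution.exists_comp_eq_π_f_zero {X Y : Type u}
    [AddCommGroup X] [Module R X] [AddCommGroup Y] [Module R Y]
    (P : ProjectiveResolution (ModuleCat.of R X)) {q : Y →ₗ[R] X} (hq : Function.Surjective q) :
    ∃ t, q ∘ₗ t = (P.π.f 0).hom := by
  have : Module.Projective R (P.complex.X 0) :=
    (IsProjective.iff_projective (P.complex.X 0)).2 (P.projective 0)
  exact Module.projective_lifting_property q (P.π.f 0).hom hq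

theorem CategoryTheory.ProjectiveResolution.surjective_π_f_zero {X : Type u}
    [AddCommGroup X] [Module R X] (P : ProjectiveResolution (ModuleCat.of R X)) :
    Function.Surjective (P.π.f 0).hom :=
  (ModuleCat.epi_iff_surjective _).1 inferInstance

theorem ext1Zero_iff_exists_comp_eq (C : Type u) [AddCommGroup C] [Module R C]
    {X : Type u} [AddCommGroup X] [Module R X] (P : ProjectiveResolution (ModuleCat.of R X)) :
    Ext1Zero R X C ↔
      ∀ φ : P.complex.X 1 ⟶ ModuleCat.of R C, P.complex.d 2 1 ≫ φ = 0 →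
        ∃ ψ : P.complex.X 0 ⟶ ModuleCat.of R C, P.complex.d 1 0 ≫ ψ = φ := by
  let K := P.complex.linearYonedaObj ℤ (ModuleCat.of R C)
  have hExt : Ext1Zero R X C ↔ K.ExactAt 1 := by
    rw [HomologicalComplex.exactAt_iff_isZero_homology, ModuleCat.isZero_iff_subsingleton]
    exact ((forget (ModuleCat ℤ)).mapIso (P.isoExt 1 (ModuleCat.of R C))).toEquiv.subsingleton_congr
  rw [hExt, K.exactAt_iff' 0 1 2 (by simp) (by simp), ShortComplex.moduleCat_exact_iff]
  rfl

theorem ext1Zero_iff_extendsAlong_ker (C : Type u) [AddCommGroup C] [Module R C]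
    {X : Type u} [AddCommGroup X] [Module R X] (P : ProjectiveResolution (ModuleCat.of R X)) :
    Ext1Zero R X C ↔ ExtendsAlong C (LinearMap.ker (P.π.f 0).hom).subtype := by
  let d₁₀ := (P.complex.d 1 0).hom
  let d₂₁ := (P.complex.d 2 1).hom
  have hd : ∀ z, d₁₀ z ∈ LinearMap.ker (P.π.f 0).hom := fun z =>
    ConcreteCategory.congr_hom P.complex_d_comp_π_f_zero z
  let ρ := LinearMap.codRestrict _ d₁₀ hd
  have hρ : Function.Surjective ρ := fun ⟨x, hx⟩ => by
    obtain ⟨z, rfl⟩ := (ShortComplex.moduleCat_exact_iff _).1 P.exact₀ x hx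
    exact ⟨z, rfl⟩
  have hρd : ∀ z, ρ (d₂₁ z) = 0 := fun z =>
    Subtype.ext (ConcreteCategory.congr_hom (P.complex.d_comp_d 2 1 0) z)
  have hkerρ : ∀ z, ρ z = 0 → ∃ w, d₂₁ w = z := fun z hz =>
    (ShortComplex.moduleCat_exact_iff _).1 (P.exact_succ 0) z (congrArg Subtype.val hz)
  rw [ext1Zero_iff_exists_comp_eq C P]
  constructor
  · intro h φ
    obtain ⟨ψ, hψ⟩ := h (ModuleCat.ofHom (φ ∘ₗ ρ)) (by
      ext z
      change φ (ρ (d₂₁ z)) = 0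
      rw [hρd, map_zero])
    refine ⟨ψ.hom, LinearMap.ext fun ⟨x, hx⟩ => ?_⟩
    obtain ⟨z, hz⟩ := hρ ⟨x, hx⟩
    rw [← hz]
    exact ConcreteCategory.congr_hom hψ z
  · intro h φ hφ
    obtain ⟨φK, hφK⟩ := exists_comp_eq_of_ker_le hρ φ.hom fun z hz => by
      obtain ⟨w, rfl⟩ := hkerρ z hz
      exact ConcreteCategory.congr_hom hφ w
    obtain ⟨ψ, hψ⟩ := h φK
    refine ⟨ModuleCat.ofHom ψ, ?_⟩
    ext z
    rw [← hφK, ← hψ]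
    rfl

theorem Ext1Zero.extendsAlong_ker {C X Y : Type u} [AddCommGroup C] [Module R C]
    [AddCommGroup X] [Module R X] [AddCommGroup Y] [Module R Y] (hX : Ext1Zero R X C)
    {q : Y →ₗ[R] X} (hq : Function.Surjective q) : ExtendsAlong C (LinearMap.ker q).subtype := by
  obtain ⟨P⟩ : Nonempty (ProjectiveResolution (ModuleCat.of R X)) := HasProjectiveResolution.out
  obtain ⟨t, ht⟩ := P.exists_comp_eq_π_f_zero hq
  exact ((ext1Zero_iff_extendsAlong_ker C P).1 hX).ker_of_comp_eq P.surjective_π_f_zero ht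

theorem IsPureExactSeq.extendsAlong_ker {C M' M M'' P : Type u} [AddCommGroup C] [Module R C]
    [AddCommGroup M'] [Module R M'] [AddCommGroup M] [Module R M] [AddCommGroup M'']
    [Module R M''] [AddCommGroup P] [Module R P] (hC : IsPureInjective R C)
    {f : M' →ₗ[R] M} {g : M →ₗ[R] M''} (hfg : IsPureExactSeq R f g) (hM : Ext1Zero R M C)
    {π : P →ₗ[R] M''} (hπ : Function.Surjective π) {t : P →ₗ[R] M} (ht : g ∘ₗ t = π) :
    ExtendsAlong C (LinearMap.ker π).subtype := by
  obtain ⟨-, hexact, hf⟩ := hfg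
  have hgt : ∀ p, g (t p) = π p := LinearMap.congr_fun ht
  intro φ
  let q := t.coprod f
  have hq : Function.Surjective q := fun m => by
    obtain ⟨p, hp⟩ := hπ (g m)
    obtain ⟨m', hm'⟩ := (hexact (m - t p)).1 (by rw [map_sub, hgt, hp, sub_self])
    exact ⟨(p, m'), by simp [q, hm']⟩
  have hfst : ∀ x ∈ LinearMap.ker q, LinearMap.fst R P M' x ∈ LinearMap.ker π := by
    rintro ⟨p, m'⟩ hx
    have htp : t p = -f m' := eq_neg_of_add_eq_zero_left hx
    rw [LinearMap.mem_ker, LinearMap.fst_apply, ← hgt, htp, map_neg,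
      hexact.apply_apply_eq_zero, neg_zero]
  obtain ⟨σ, hσ⟩ := hM.extendsAlong_ker hq (φ ∘ₗ (LinearMap.fst R P M').restrict hfst)
  obtain ⟨ψ, hψ⟩ := hC M' M f hf (σ ∘ₗ LinearMap.inr R P M')
  refine ⟨σ ∘ₗ LinearMap.inl R P M' - ψ ∘ₗ t, LinearMap.ext fun ⟨p, hp⟩ => ?_⟩
  obtain ⟨m', hm'⟩ := (hexact (t p)).1 (by rw [hgt]; exact hp)
  have hk : (p, -m') ∈ LinearMap.ker q := by simp [q, hm']
  calc σ (p, 0) - ψ (t p) = σ (p, -m') := by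
        rw [← hm', ← LinearMap.comp_apply ψ f, hψ, LinearMap.comp_apply, LinearMap.inr_apply,
          ← map_sub, Prod.mk_sub_mk, sub_zero, zero_sub]
    _ = φ ⟨p, hp⟩ := LinearMap.congr_fun hσ ⟨(p, -m'), hk⟩

end

/-- If `C` is pure injective, the class `⊥C = {M : Ext¹(M, C) = 0}` is closed under pure
quotient modules. -/
theorem stmt5 (R : Type u) [Ring R] (C : Type u) [AddCommGroup C] [Module R C]
    (hC : IsPureInjective R C)
    (M' M M'' : Type u) [AddCommGroup M'] [Module R M'] [AddCommGroup M] [Module R M]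
    [AddCommGroup M''] [Module R M'']
    (f : M' →ₗ[R] M) (g : M →ₗ[R] M'') (hpure : IsPureExactSeq R f g)
    (hM : Ext1Zero R M C) :
    Ext1Zero R M'' C := by
  obtain ⟨P⟩ : Nonempty (ProjectiveResolution (ModuleCat.of R M'')) :=
    HasProjectiveResolution.out
  obtain ⟨t, ht⟩ := P.exists_comp_eq_π_f_zero hpure.1
  rw [ext1Zero_iff_extendsAlong_ker C P]
  exact hpure.extendsAlong_ker hC hM P.surjective_π_f_zero ht

end
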